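/- arXiv:1611.02463 — 4 statements merged into one kernel-verified Lean document; each statement's English description precedes it below -/
import Mathlib

section
/- With the definitions of ℛ, 𝒮, U± as above, for 2M×κ real matrices P, Q, R, S one has η±(P,Q,R,S) = η±(Q,P,S,R), using the identities ℛ(P,Q)ℛ(R,S)^T = J_{2M} ℛ(Q,P) ℛ(S,R)^T J_{2M} and 𝒮(P,Q)𝒮(R,S)^T = (I₂⊗J_M) 𝒮(Q,P) 𝒮(S,R)^T (I₂⊗J_M). -/
open Matrix Finset

/-- The `n × n` exchange (anti-identity) matrix `J_n`. -/
def Jmat (n : ℕ) : Matrix (Fin n) (Fin n) ℝ :=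
  fun i j => if (i : ℕ) + (j : ℕ) = n - 1 then 1 else 0

/-- Row-wise convolution: each row of `A` convolved with the corresponding row of `B`,
producing rows of length `2κ − 1`. -/
def rowConv {m κ : ℕ} (A B : Matrix (Fin m) (Fin κ) ℝ) :
    Matrix (Fin m) (Fin (2 * κ - 1)) ℝ :=
  fun i k => ∑ a : Fin κ, ∑ b : Fin κ,
    if (a : ℕ) + (b : ℕ) = (k : ℕ) then A i a * B i b else 0

/-- The matrix `J₂ ⊗ I_M`, acting on `2M` rows by swapping the two halves. -/
def swapHalves (M : ℕ) : Matrix (Fin (2 * M)) (Fin (2 * M)) ℝ :=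
  fun i j => if ((i : ℕ) + M) % (2 * M) = (j : ℕ) then 1 else 0

/-- The matrix `U^ε = I₂ ⊗ (I_M + ε J_M)` (for `ε = 1` this is `U⁺`, for `ε = -1` it is `U⁻`). -/
def Umat (M : ℕ) (ε : ℝ) : Matrix (Fin (2 * M)) (Fin (2 * M)) ℝ :=
  fun i j => (if i = j then (1 : ℝ) else 0) +
    ε * (if (i : ℕ) / M = (j : ℕ) / M ∧ (i : ℕ) % M + (j : ℕ) % M = M - 1 then 1 else 0)

/-- `ℛ(P,Q) = P ⊛ (J_{2M} Q)`. -/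
def Rcal {M κ : ℕ} (P Q : Matrix (Fin (2 * M)) (Fin κ) ℝ) :
    Matrix (Fin (2 * M)) (Fin (2 * κ - 1)) ℝ :=
  rowConv P (Jmat (2 * M) * Q)

/-- `𝒮(P,Q) = ((J₂ ⊗ I_M) P) ⊛ (J_{2M} Q)`. -/
def Scal {M κ : ℕ} (P Q : Matrix (Fin (2 * M)) (Fin κ) ℝ) :
    Matrix (Fin (2 * M)) (Fin (2 * κ - 1)) ℝ :=
  rowConv (swapHalves M * P) (Jmat (2 * M) * Q)

/-- `η` with sign `ε`:
`η^ε(P,Q,R,S) = (1/(2M)) tr[U^ε ℛ(P,Q) ℛ(R,S)ᵀ + U^{-ε} 𝒮(P,Q) 𝒮(R,S)ᵀ]`.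
For `ε = 1` this is the quantity `η^{(+,-)}` (with `U⁺` on `ℛ` and `U⁻` on `𝒮`);
for `ε = -1` it is `η^{(-,+)}`. -/
noncomputable def etaSign {M κ : ℕ} (ε : ℝ) (P Q R S : Matrix (Fin (2 * M)) (Fin κ) ℝ) : ℝ :=
  (1 / (2 * (M : ℝ))) *
    Matrix.trace (Umat M ε * Rcal P Q * (Rcal R S)ᵀ + Umat M (-ε) * Scal P Q * (Scal R S)ᵀ)

/-- Arrange a pulse of length `2Mκ` into a `2M × κ` matrix column by column. -/
def toMat (M κ : ℕ) (p : Fin (2 * M * κ) → ℝ) : Matrix (Fin (2 * M)) (Fin κ) ℝ :=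
  fun i k => p ⟨(k : ℕ) * (2 * M) + (i : ℕ), by
    have h1 := i.isLt
    have h2 := k.isLt
    calc (k : ℕ) * (2 * M) + (i : ℕ) < ((k : ℕ) + 1) * (2 * M) := by
          rw [Nat.add_mul, Nat.one_mul]; omega
      _ ≤ κ * (2 * M) := Nat.mul_le_mul_right _ h2
      _ = 2 * M * κ := Nat.mul_comm _ _⟩

/-!
Exchanging the two factors of a row-wise convolution is harmless, so swapping `P` and `Q` in
`ℛ(P, Q) = P ⊛ J_{2M} Q` only reverses the order of the rows: `ℛ(P, Q) = J_{2M} ℛ(Q, P)`, and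
likewise `𝒮(P, Q) = (I₂ ⊗ J_M) 𝒮(Q, P)` because `J_{2M} = J₂ ⊗ J_M`. Both row permutations are
symmetries of `U^± = I₂ ⊗ (I_M ± J_M)`, so by cyclicity of the trace they cancel in `η^±`.
-/

/-- The permutation `f ⊗ g`, transported along `Fin m × Fin n ≃ Fin (m * n)`,
`(a, b) ↦ b + n * a`. -/
def kronPerm {m n : ℕ} (f : Equiv.Perm (Fin m)) (g : Equiv.Perm (Fin n)) :
    Equiv.Perm (Fin (m * n)) :=
  finProdFinEquiv.permCongr (f.prodCongr g)

@[simp]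
theorem kronPerm_finProdFinEquiv {m n : ℕ} (f : Equiv.Perm (Fin m)) (g : Equiv.Perm (Fin n))
    (a : Fin m) (b : Fin n) :
    kronPerm f g (finProdFinEquiv (a, b)) = finProdFinEquiv (f a, g b) := by
  simp [kronPerm, Equiv.permCongr_apply]

theorem kronPerm_mul {m n : ℕ} (f f' : Equiv.Perm (Fin m)) (g g' : Equiv.Perm (Fin n)) :
    kronPerm f g * kronPerm f' g' = kronPerm (f * f') (g * g') := by
  ext i
  obtain ⟨⟨a, b⟩, rfl⟩ := finProdFinEquiv.surjective i
  simp

theorem Fin.revPerm_mul_revPerm {n : ℕ} :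
    (Fin.revPerm : Equiv.Perm (Fin n)) * Fin.revPerm = 1 := by
  ext; simp

theorem Fin.rev_finProdFinEquiv {m n : ℕ} (a : Fin m) (b : Fin n) :
    (finProdFinEquiv (a, b)).rev = finProdFinEquiv (a.rev, b.rev) := by
  have : n * (a + 1) ≤ n * m := Nat.mul_le_mul_left _ a.2
  ext
  simp only [Fin.val_rev, finProdFinEquiv_apply_val, Nat.mul_sub, Nat.mul_succ] at *
  rw [Nat.mul_comm m n]
  omega

theorem Fin.revPerm_eq_kronPerm {m n : ℕ} :
    (Fin.revPerm : Equiv.Perm (Fin (m * n))) = kronPerm Fin.revPerm Fin.revPerm := by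
  ext i
  obtain ⟨⟨a, b⟩, rfl⟩ := finProdFinEquiv.surjective i
  simp [Fin.rev_finProdFinEquiv]

theorem Matrix.submatrix_one_id_mul {n ι R : Type*} [Fintype n] [DecidableEq n]
    [NonAssocSemiring R] (σ : n → n) (X : Matrix n ι R) :
    (1 : Matrix n n R).submatrix σ id * X = X.submatrix σ id :=
  one_submatrix_mul σ (Equiv.refl n) X

theorem Matrix.trace_submatrix_equiv {n R : Type*} [Fintype n] [AddCommMonoid R]
    (A : Matrix n n R) (σ : n ≃ n) : (A.submatrix σ σ).trace = A.trace :=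
  Equiv.sum_comp σ fun i => A i i

theorem Matrix.trace_mul_submatrix_mul_transpose_submatrix {n m R : Type*} [Fintype n]
    [Fintype m] [CommSemiring R] {U : Matrix n n R} {σ : n ≃ n} (hU : U.submatrix σ σ = U)
    (X Y : Matrix n m R) :
    (U * X.submatrix σ id * (Y.submatrix σ id)ᵀ).trace = (U * X * Yᵀ).trace := by
  conv_lhs => rw [← hU]
  rw [submatrix_mul_equiv, transpose_submatrix,
    ← submatrix_mul _ _ _ _ _ Function.bijective_id, trace_submatrix_equiv]

theorem Jmat_eq_submatrix_one (n : ℕ) :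
    Jmat n = (1 : Matrix (Fin n) (Fin n) ℝ).submatrix Fin.revPerm id := by
  ext i j
  refine if_congr ?_ rfl rfl
  rw [id, Fin.revPerm_apply, Fin.ext_iff, Fin.val_rev]
  omega

theorem swapHalves_eq_submatrix_one (M : ℕ) :
    swapHalves M = (1 : Matrix _ _ ℝ).submatrix (kronPerm Fin.revPerm 1) id := by
  ext i j
  obtain ⟨⟨a, b⟩, rfl⟩ := finProdFinEquiv.surjective i
  refine if_congr ?_ rfl rfl
  have hb := b.2
  rw [kronPerm_finProdFinEquiv, id, Fin.ext_iff]
  fin_cases a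
  · simp [Nat.mod_eq_of_lt (show (b : ℕ) + M < 2 * M by omega)]
  · simp [show (b : ℕ) + M + M = b + 2 * M by ring,
      Nat.mod_eq_of_lt (show (b : ℕ) < 2 * M by omega)]

theorem Umat_finProdFinEquiv (M : ℕ) (ε : ℝ) (a c : Fin 2) (b d : Fin M) :
    Umat M ε (finProdFinEquiv (a, b)) (finProdFinEquiv (c, d)) =
      (if (a, b) = (c, d) then 1 else 0) +
        ε * (if a = c ∧ (b : ℕ) + d = M - 1 then 1 else 0) := by
  have hM : 0 < M := b.pos
  simp [Umat, Fin.ext_iff, Nat.add_mul_div_left _ _ hM, Nat.div_eq_of_lt, Nat.mod_eq_of_lt]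

theorem Umat_submatrix_kronPerm (M : ℕ) (ε : ℝ) (f : Equiv.Perm (Fin 2)) :
    (Umat M ε).submatrix (kronPerm f Fin.revPerm) (kronPerm f Fin.revPerm) = Umat M ε := by
  ext i j
  obtain ⟨⟨a, b⟩, rfl⟩ := finProdFinEquiv.surjective i
  obtain ⟨⟨c, d⟩, rfl⟩ := finProdFinEquiv.surjective j
  have hrev : M - (b + 1) + (M - (d + 1)) = M - 1 ↔ (b : ℕ) + d = M - 1 := by omega
  simp [Umat_finProdFinEquiv, hrev]

theorem Umat_submatrix_revPerm (M : ℕ) (ε : ℝ) :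
    (Umat M ε).submatrix Fin.revPerm Fin.revPerm = Umat M ε := by
  rw [Fin.revPerm_eq_kronPerm, Umat_submatrix_kronPerm]

theorem rowConv_comm {m κ : ℕ} (A B : Matrix (Fin m) (Fin κ) ℝ) :
    rowConv A B = rowConv B A := by
  ext i k
  rw [rowConv, rowConv, Finset.sum_comm]
  simp only [add_comm (_ : ℕ), mul_comm (A i _)]

theorem rowConv_submatrix {m m' κ : ℕ} (A B : Matrix (Fin m) (Fin κ) ℝ) (σ : Fin m' → Fin m) :
    rowConv (A.submatrix σ id) (B.submatrix σ id) = (rowConv A B).submatrix σ id :=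
  rfl

theorem Rcal_eq_submatrix {M κ : ℕ} (P Q : Matrix (Fin (2 * M)) (Fin κ) ℝ) :
    Rcal P Q = (Rcal Q P).submatrix Fin.revPerm id := by
  rw [Rcal, Rcal, Jmat_eq_submatrix_one, submatrix_one_id_mul, submatrix_one_id_mul,
    ← rowConv_submatrix, submatrix_submatrix, ← Equiv.Perm.coe_mul, Fin.revPerm_mul_revPerm,
    Equiv.Perm.coe_one, Function.comp_id, submatrix_id_id, rowConv_comm]

theorem Scal_eq_submatrix {M κ : ℕ} (P Q : Matrix (Fin (2 * M)) (Fin κ) ℝ) :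
    Scal P Q = (Scal Q P).submatrix (kronPerm 1 Fin.revPerm) id := by
  have hswap : kronPerm Fin.revPerm 1 * kronPerm 1 Fin.revPerm =
      (Fin.revPerm : Equiv.Perm (Fin (2 * M))) := by
    rw [kronPerm_mul, Fin.revPerm_eq_kronPerm, mul_one, one_mul]
  have hrev : Fin.revPerm * kronPerm 1 Fin.revPerm =
      kronPerm (Fin.revPerm : Equiv.Perm (Fin 2)) (1 : Equiv.Perm (Fin M)) := by
    rw [Fin.revPerm_eq_kronPerm, kronPerm_mul, mul_one, Fin.revPerm_mul_revPerm]
  rw [Scal, Scal, Jmat_eq_submatrix_one, swapHalves_eq_submatrix_one, submatrix_one_id_mul,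
    submatrix_one_id_mul, submatrix_one_id_mul, submatrix_one_id_mul, ← rowConv_submatrix,
    submatrix_submatrix, submatrix_submatrix, ← Equiv.Perm.coe_mul, ← Equiv.Perm.coe_mul,
    hswap, hrev, Function.comp_id, rowConv_comm]

theorem etaSign_swap_within_pairs_general {M κ : ℕ} (ε : ℝ)
    (P Q R S : Matrix (Fin (2 * M)) (Fin κ) ℝ) :
    etaSign ε P Q R S = etaSign ε Q P S R := by
  rw [etaSign, trace_add, Rcal_eq_submatrix P Q, Rcal_eq_submatrix R S,
    Scal_eq_submatrix P Q, Scal_eq_submatrix R S,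
    trace_mul_submatrix_mul_transpose_submatrix (Umat_submatrix_revPerm M ε),
    trace_mul_submatrix_mul_transpose_submatrix (Umat_submatrix_kronPerm M (-ε) 1),
    ← trace_add, etaSign]

/-- `η^±(P,Q,R,S) = η^±(Q,P,S,R)` (for both choices of sign). -/
theorem etaSign_swap_within_pairs {M κ : ℕ} (ε : ℝ) (hε : ε = 1 ∨ ε = -1)
    (P Q R S : Matrix (Fin (2 * M)) (Fin κ) ℝ) :
    etaSign ε P Q R S = etaSign ε Q P S R :=
  etaSign_swap_within_pairs_general ε P Q R S
end

section
/- Let A, B, C, D be M×κ real matrices. Then the diagonal entries of (A ⊛ B J_κ)(C ⊛ D J_κ)^T J_M coincide with the diagonal entries of J_M (C ⊛ J_M B)(A ⊛ J_M D)^T. -/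
open Matrix Finset

lemma mul_Jmat_apply {m n : ℕ} (B : Matrix (Fin m) (Fin n) ℝ) (i : Fin m) (j : Fin n) :
    (B * Jmat n) i j = B i j.rev := by
  rw [Matrix.mul_apply]
  have : ∀ a : Fin n, B i a * Jmat n a j = if a = j.rev then B i a else 0 := by
    intro a
    have hj := j.is_lt
    have ha := a.is_lt
    have : ((a : ℕ) + (j : ℕ) = n - 1) ↔ a = j.rev := by
      rw [Fin.ext_iff, Fin.val_rev]; omega
    simp [Jmat, this, mul_ite]
  simp [this]

lemma Jmat_mul_apply {m n : ℕ} (B : Matrix (Fin m) (Fin n) ℝ) (i : Fin m) (j : Fin n) :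
    (Jmat m * B) i j = B i.rev j := by
  rw [Matrix.mul_apply]
  have : ∀ a : Fin m, Jmat m i a * B a j = if a = i.rev then B a j else 0 := by
    intro a
    have : ((i : ℕ) + (a : ℕ) = m - 1) ↔ a = i.rev := by
      have := i.is_lt; have := a.is_lt
      rw [Fin.ext_iff, Fin.val_rev]; omega
    simp [Jmat, this, ite_mul]
  simp [this]

lemma inner_sum_aux {n : ℕ} {x y : ℕ} (hx : x < n) (hy : y < n) (p q : ℝ) :
    (∑ k : Fin n, (if x = (k : ℕ) then p else 0) * (if y = (k : ℕ) then q else 0))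
      = if x = y then p * q else 0 := by
  have ex : ∀ k : Fin n, (x = (k : ℕ)) = ((⟨x, hx⟩ : Fin n) = k) := fun k => by
    simp [Fin.ext_iff]
  have ey : ∀ k : Fin n, (y = (k : ℕ)) = ((⟨y, hy⟩ : Fin n) = k) := fun k => by
    simp [Fin.ext_iff]
  simp only [ex, ey, ite_mul, zero_mul, Finset.sum_ite_eq, Finset.mem_univ, if_true]
  by_cases h : x = y
  · simp [h]
  · have h' : ¬ ((⟨y, hy⟩ : Fin n) = ⟨x, hx⟩) := by simp [Fin.ext_iff]; omega
    simp [h, h']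

lemma conv_key {κ : ℕ} (f g : Fin κ → Fin κ → ℝ) :
    ∑ k : Fin (2 * κ - 1),
        (∑ a : Fin κ, ∑ b : Fin κ, if (a : ℕ) + b = k then f a b else 0) *
        (∑ c : Fin κ, ∑ d : Fin κ, if (c : ℕ) + d = k then g c d else 0)
      = ∑ p : (Fin κ × Fin κ) × Fin κ × Fin κ,
          if (p.1.1 : ℕ) + p.1.2 = (p.2.1 : ℕ) + p.2.2
            then f p.1.1 p.1.2 * g p.2.1 p.2.2 else 0 := by
  have L : ∀ k : Fin (2 * κ - 1),
      (∑ a : Fin κ, ∑ b : Fin κ, if (a : ℕ) + b = k then f a b else 0)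
        = ∑ p : Fin κ × Fin κ, if (p.1 : ℕ) + p.2 = k then f p.1 p.2 else 0 := fun k => by
    rw [Fintype.sum_prod_type]
  have Lg : ∀ k : Fin (2 * κ - 1),
      (∑ c : Fin κ, ∑ d : Fin κ, if (c : ℕ) + d = k then g c d else 0)
        = ∑ p : Fin κ × Fin κ, if (p.1 : ℕ) + p.2 = k then g p.1 p.2 else 0 := fun k => by
    rw [Fintype.sum_prod_type]
  simp only [L, Lg, Finset.sum_mul_sum]
  rw [Fintype.sum_prod_type, Finset.sum_comm]
  refine Finset.sum_congr rfl fun p _ => ?_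
  rw [Finset.sum_comm]
  refine Finset.sum_congr rfl fun q _ => ?_
  have h1 : (p.1 : ℕ) + p.2 < 2 * κ - 1 := by
    have := p.1.is_lt; have := p.2.is_lt; omega
  have h2 : (q.1 : ℕ) + q.2 < 2 * κ - 1 := by
    have := q.1.is_lt; have := q.2.is_lt; omega
  exact inner_sum_aux h1 h2 _ _

/-- The diagonal entries of `(A ⊛ B J_κ)(C ⊛ D J_κ)ᵀ J_M` coincide with the diagonal
entries of `J_M (C ⊛ J_M B)(A ⊛ J_M D)ᵀ`. -/
theorem rowConv_diag_exchange {M κ : ℕ} (A B C D : Matrix (Fin M) (Fin κ) ℝ) :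
    ∀ i : Fin M,
      (rowConv A (B * Jmat κ) * (rowConv C (D * Jmat κ))ᵀ * Jmat M) i i
        = (Jmat M * rowConv C (Jmat M * B) * (rowConv A (Jmat M * D))ᵀ) i i := by
  intro i
  rw [mul_Jmat_apply, Matrix.mul_apply, Matrix.mul_apply]
  simp only [Matrix.transpose_apply, Jmat_mul_apply]
  simp only [rowConv, mul_Jmat_apply, Jmat_mul_apply, Fin.rev_rev]
  rw [conv_key (fun a b => A i a * B i b.rev) (fun c d => C i.rev c * D i.rev d.rev),
      conv_key (fun a b => C i.rev a * B i b) (fun c d => A i c * D i.rev d)]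
  refine Fintype.sum_bijective
    (fun p : (Fin κ × Fin κ) × Fin κ × Fin κ => ((p.2.1, p.1.2.rev), (p.1.1, p.2.2.rev)))
    (Function.Involutive.bijective (fun p => by simp)) _ _ (fun p => ?_)
  dsimp only
  refine if_congr ?_ (by ring) rfl
  have hb := p.1.2.is_lt
  have hd := p.2.2.is_lt
  rw [Fin.val_rev, Fin.val_rev]
  omega
end

section
/- Under perfect reconstruction conditions on (p,q) (U⁻𝒮(p,q)=0 and U⁺ℛ(p,q) zero except for an all-ones central column), one has (1/(2M)) tr[U⁺ ℛ(p,q) ℛ(r,s)^T + U⁻ 𝒮(p,q) 𝒮(r,s)^T] = (1/(2M)) Σ_{n=1}^{2Mκ} r[n] s[2Mκ−n+1] for any real pulses r, s of length 2Mκ. -/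
open Matrix Finset

/-- The `2M × (2κ−1)` matrix which is zero everywhere except for its central column
(column index `κ − 1`), which is filled with ones. -/
def centralCol (M κ : ℕ) : Matrix (Fin (2 * M)) (Fin (2 * κ - 1)) ℝ :=
  fun _ k => if (k : ℕ) = κ - 1 then 1 else 0

/-- Under the perfect reconstruction conditions on `(p,q)`,
`(1/(2M)) tr[U⁺ ℛ(p,q) ℛ(r,s)ᵀ + U⁻ 𝒮(p,q) 𝒮(r,s)ᵀ] = (1/(2M)) Σ_n r[n] s[2Mκ−n+1]`
for any real pulses `r, s` of length `2Mκ`. -/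
theorem etaSign_PR_eq_sum {M κ : ℕ} (hM : 0 < M) (hκ : 0 < κ)
    (p q r s : Fin (2 * M * κ) → ℝ)
    (hPR1 : Umat M (-1) * Scal (toMat M κ p) (toMat M κ q) = 0)
    (hPR2 : Umat M 1 * Rcal (toMat M κ p) (toMat M κ q) = centralCol M κ) :
    (1 / (2 * (M : ℝ))) *
        Matrix.trace (Umat M 1 * Rcal (toMat M κ p) (toMat M κ q) * (Rcal (toMat M κ r) (toMat M κ s))ᵀ
          + Umat M (-1) * Scal (toMat M κ p) (toMat M κ q) * (Scal (toMat M κ r) (toMat M κ s))ᵀ)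
      = (1 / (2 * (M : ℝ))) * ∑ n : Fin (2 * M * κ), r n * s n.rev := by
  have h2M : 0 < 2 * M := by omega
  rw [hPR1, hPR2, Matrix.zero_mul, Matrix.trace_add, Matrix.trace_zero, add_zero]
  congr 1
  have hk0 : κ - 1 < 2 * κ - 1 := by omega
  -- the bijection (i, a) ↦ a·2M + i
  have hlt : ∀ (i : Fin (2*M)) (a : Fin κ), (a:ℕ)*(2*M)+(i:ℕ) < 2*M*κ := by
    intro i a
    calc (a:ℕ)*(2*M)+(i:ℕ) < ((a:ℕ)+1)*(2*M) := by rw [Nat.add_mul, Nat.one_mul]; omega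
      _ ≤ κ * (2*M) := Nat.mul_le_mul_right _ a.isLt
      _ = 2*M*κ := Nat.mul_comm _ _
  have hbij : Function.Bijective (fun x : Fin (2*M) × Fin κ =>
      (⟨(x.2:ℕ)*(2*M)+(x.1:ℕ), hlt x.1 x.2⟩ : Fin (2*M*κ))) := by
    rw [Fintype.bijective_iff_injective_and_card]
    constructor
    · rintro ⟨i,a⟩ ⟨i',a'⟩ h
      have h' : (a:ℕ)*(2*M)+(i:ℕ) = (a':ℕ)*(2*M)+(i':ℕ) := congrArg Fin.val h
      have hi := i.isLt; have hi' := i'.isLt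
      have h1 : (i:ℕ) = (i':ℕ) := by
        have e1 : ((a:ℕ)*(2*M)+(i:ℕ)) % (2*M) = (i:ℕ) := by
          rw [Nat.mul_comm (a:ℕ) (2*M), Nat.mul_add_mod, Nat.mod_eq_of_lt hi]
        have e2 : ((a':ℕ)*(2*M)+(i':ℕ)) % (2*M) = (i':ℕ) := by
          rw [Nat.mul_comm (a':ℕ) (2*M), Nat.mul_add_mod, Nat.mod_eq_of_lt hi']
        rw [← e1, ← e2, h']
      have h2 : (a:ℕ) = (a':ℕ) := by
        have : (a:ℕ)*(2*M) = (a':ℕ)*(2*M) := by omega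
        exact Nat.eq_of_mul_eq_mul_right h2M this
      simp [Prod.ext_iff, Fin.ext_iff, h1, h2]
    · simp [Fintype.card_prod]
  have hRHS : (∑ n : Fin (2*M*κ), r n * s n.rev)
      = ∑ i : Fin (2*M), ∑ a : Fin κ,
          r ⟨(a:ℕ)*(2*M)+(i:ℕ), hlt i a⟩ * s (⟨(a:ℕ)*(2*M)+(i:ℕ), hlt i a⟩ : Fin (2*M*κ)).rev := by
    rw [← Fintype.sum_bijective _ hbij _ _ (fun x => rfl), Fintype.sum_prod_type]
  rw [hRHS, Matrix.trace]
  refine Finset.sum_congr rfl fun i _ => ?_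
  rw [Matrix.diag_apply, Matrix.mul_apply]
  rw [Finset.sum_eq_single (⟨κ-1, hk0⟩ : Fin (2*κ-1))]
  · have hc : centralCol M κ i ⟨κ-1, hk0⟩ = 1 := if_pos rfl
    rw [Matrix.transpose_apply, hc, one_mul, Rcal, rowConv]
    refine Finset.sum_congr rfl fun a _ => ?_
    have ha : (a:ℕ) ≤ κ - 1 := by omega
    rw [Finset.sum_eq_single (⟨κ-1-(a:ℕ), by omega⟩ : Fin κ)]
    · rw [if_pos (by simp; omega)]
      -- compute (Jmat * toMat s) i b
      have hJ : (Jmat (2*M) * toMat M κ s) i ⟨κ-1-(a:ℕ), by omega⟩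
          = toMat M κ s ⟨2*M-1-(i:ℕ), by omega⟩ ⟨κ-1-(a:ℕ), by omega⟩ := by
        rw [Matrix.mul_apply]
        rw [Finset.sum_eq_single (⟨2*M-1-(i:ℕ), by omega⟩ : Fin (2*M))]
        · rw [Jmat, if_pos (by simp; omega), one_mul]
        · intro j _ hj
          rw [Jmat, if_neg, zero_mul]
          intro h; apply hj; apply Fin.ext; simp at h ⊢; omega
        · simp
      rw [hJ]
      have hidx : (⟨(κ-1-(a:ℕ))*(2*M)+(2*M-1-(i:ℕ)),
            hlt ⟨2*M-1-(i:ℕ), by omega⟩ ⟨κ-1-(a:ℕ), by omega⟩⟩ : Fin (2*M*κ))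
          = (⟨(a:ℕ)*(2*M)+(i:ℕ), hlt i a⟩ : Fin (2*M*κ)).rev := by
        apply Fin.ext
        simp only [Fin.rev]
        have h1 : ((a:ℕ)+1)*(2*M) ≤ κ*(2*M) := Nat.mul_le_mul_right _ a.isLt
        have h2 : (κ-1-(a:ℕ))*(2*M) = κ*(2*M) - (2*M) - (a:ℕ)*(2*M) := by
          rw [Nat.sub_mul, Nat.sub_mul, Nat.one_mul]
        have h3 : κ*(2*M) = 2*M*κ := Nat.mul_comm _ _
        have hi := i.isLt
        rw [Nat.add_mul, Nat.one_mul] at h1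
        omega
      show r ⟨(a:ℕ)*(2*M)+(i:ℕ), hlt i a⟩ *
          s ⟨(κ-1-(a:ℕ))*(2*M)+(2*M-1-(i:ℕ)),
            hlt ⟨2*M-1-(i:ℕ), by omega⟩ ⟨κ-1-(a:ℕ), by omega⟩⟩
        = r ⟨(a:ℕ)*(2*M)+(i:ℕ), hlt i a⟩ *
          s (⟨(a:ℕ)*(2*M)+(i:ℕ), hlt i a⟩ : Fin (2*M*κ)).rev
      rw [hidx]
    · intro b _ hb
      rw [if_neg, ]
      intro h; apply hb; apply Fin.ext; simp at h ⊢; omega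
    · simp
  · intro k _ hk
    rw [Matrix.transpose_apply]
    simp only [centralCol]
    rw [if_neg, zero_mul]
    intro h; exact hk (Fin.ext h)
  · simp
end

section
/- Let X = H^H H + (α/2)(H^H H'' + H''^H H) + α H'^H H' + c I_N be invertible with Re(H X^{-1} H^H) invertible, where H ∈ ℂ^{N_U×N}, H', H'' ∈ ℂ^{N_U×N}, α, c > 0. Define Ψ = −(Re(H X^{-1} H^H))^{-1} Im(H X^{-1}(H^H + (α/2)H''^H)) and Â = X^{-1}(j H^H Ψ + H^H + (α/2)H''^H). Then Im(H Â) = 0. -/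
open Matrix

lemma im_smulI_mul_realmap {m n p : Type*} [Fintype n]
    (M : Matrix m n ℂ) (Ψ : Matrix n p ℝ) :
    (Complex.I • (M * Ψ.map Complex.ofReal)).map Complex.im
      = M.map Complex.re * Ψ := by
  ext i k
  simp [Matrix.mul_apply, Complex.im_sum, Matrix.map_apply]

/-- For the MMSE FBMC downlink precoder: with
`X = Hᴴ H + (α/2)(Hᴴ H'' + H''ᴴ H) + α H'ᴴ H' + c I_N` invertible,
`Re(H X⁻¹ Hᴴ)` invertible,
`Ψ = −(Re(H X⁻¹ Hᴴ))⁻¹ Im(H X⁻¹ (Hᴴ + (α/2) H''ᴴ))` and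
`Â = X⁻¹ (j Hᴴ Ψ + Hᴴ + (α/2) H''ᴴ)`, one has `Im(H Â) = 0`. -/
theorem mmse_precoder_im_zero {N NU : ℕ} (α c : ℝ) (hα : 0 < α) (hc : 0 < c)
    (H H' H'' : Matrix (Fin NU) (Fin N) ℂ) :
    let X : Matrix (Fin N) (Fin N) ℂ :=
      Hᴴ * H + ((α / 2 : ℝ) : ℂ) • (Hᴴ * H'' + H''ᴴ * H) + (α : ℂ) • (H'ᴴ * H')
        + (c : ℂ) • (1 : Matrix (Fin N) (Fin N) ℂ)
    IsUnit X.det →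
    IsUnit ((H * X⁻¹ * Hᴴ).map Complex.re).det →
    let Ψ : Matrix (Fin NU) (Fin NU) ℝ :=
      -(((H * X⁻¹ * Hᴴ).map Complex.re)⁻¹ *
        ((H * X⁻¹ * (Hᴴ + ((α / 2 : ℝ) : ℂ) • H''ᴴ)).map Complex.im))
    let A : Matrix (Fin N) (Fin NU) ℂ :=
      X⁻¹ * (Complex.I • (Hᴴ * Ψ.map (Complex.ofReal)) + Hᴴ + ((α / 2 : ℝ) : ℂ) • H''ᴴ)
    (H * A).map Complex.im = 0 := by
  intro X hX hRe Ψ A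
  set M : Matrix (Fin NU) (Fin NU) ℂ := H * X⁻¹ * Hᴴ with hM
  set B : Matrix (Fin NU) (Fin NU) ℂ :=
    H * X⁻¹ * (Hᴴ + ((α / 2 : ℝ) : ℂ) • H''ᴴ) with hB
  have hHA : H * A = Complex.I • (M * Ψ.map Complex.ofReal) + B := by
    simp only [A, hM, hB, Matrix.mul_add, Matrix.mul_smul, ← Matrix.mul_assoc]
    abel
  have him : ∀ (C D : Matrix (Fin NU) (Fin NU) ℂ),
      (C + D).map Complex.im = C.map Complex.im + D.map Complex.im := by
    intro C D; ext i k; simp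
  rw [hHA, him, im_smulI_mul_realmap]
  have hcancel : M.map Complex.re * Ψ = -(B.map Complex.im) := by
    show M.map Complex.re *
      -((M.map Complex.re)⁻¹ * (B.map Complex.im)) = -(B.map Complex.im)
    rw [Matrix.mul_neg, ← Matrix.mul_assoc, Matrix.mul_nonsing_inv _ hRe,
      Matrix.one_mul]
  rw [hcancel]
  simp
end
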